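/- If C is a cycle with no exit in Γ and v = s(C), then the corner algebra v L_k(Γ) v is isomorphic to the Laurent polynomial algebra k[x, x⁻¹], with x corresponding to C*. -/

import Mathlib

/-! Preamble: digraphs, paths, and Leavitt path algebras over a commutative ring. -/

structure DGraph : Type 1 where
  V : Type
  E : Type
  s : E → V
  t : E → V

namespace DGraph

/-- Generators of the Leavitt path algebra: vertices, arrows, ghost (dual) arrows. -/
inductive Gen (Γ : DGraph) : Type
  | vert : Γ.V → Gen Γ
  | edge : Γ.E → Gen Γ
  | ghost : Γ.E → Gen Γ

variable (Γ : DGraph)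

def IsSink (v : Γ.V) : Prop := ∀ e : Γ.E, Γ.s e ≠ v

def RowFinite : Prop := ∀ v : Γ.V, {e : Γ.E | Γ.s e = v}.Finite

/-- `IsWalkFrom v l` : the list of arrows `l` forms a path starting at `v`. -/
def IsWalkFrom : Γ.V → List Γ.E → Prop
  | _, [] => True
  | v, e :: l => Γ.s e = v ∧ IsWalkFrom (Γ.t e) l

/-- Target of a walk. -/
def walkTrg : Γ.V → List Γ.E → Γ.V
  | v, [] => v
  | _, e :: l => walkTrg (Γ.t e) l

/-- A (finite) path in `Γ`: a source vertex together with a compatible list of arrows.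
A path of length 0 is a single vertex. -/
structure Path (Γ : DGraph) : Type where
  src : Γ.V
  edges : List Γ.E
  valid : Γ.IsWalkFrom src edges

variable {Γ}

def Path.trg (p : Path Γ) : Γ.V := Γ.walkTrg p.src p.edges

/-- `q` is an initial segment of `p`, i.e. `p = q r`. -/
def IsInitialSegment (q p : Path Γ) : Prop := p.src = q.src ∧ q.edges <+: p.edges

/-- A cycle: a path of positive length from a vertex back to itself with pairwise
distinct sources of its arrows. -/
def Path.IsCycle (p : Path Γ) : Prop :=
  p.edges ≠ [] ∧ p.trg = p.src ∧ (p.edges.map Γ.s).Nodup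

/-- The vertex `v` is on the path `p`. -/
def Path.OnPath (p : Path Γ) (v : Γ.V) : Prop := p.src = v ∨ ∃ e ∈ p.edges, Γ.t e = v

/-- The path `p` has no exit: every arrow whose source is on `p` is an arrow of `p`. -/
def NoExit (p : Path Γ) : Prop := ∀ f : Γ.E, p.OnPath (Γ.s f) → f ∈ p.edges

variable (Γ)

/-- There is a path from `u` to `v`. -/
def Reaches (u v : Γ.V) : Prop := ∃ p : Path Γ, p.src = u ∧ p.trg = v

/-- The cycles of `Γ` are pairwise disjoint: two cycles sharing a vertex coincide
(up to rotation, i.e. they have the same arrows). -/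
def CyclesPairwiseDisjoint : Prop :=
  ∀ C D : Path Γ, C.IsCycle → D.IsCycle → (∃ v, C.OnPath v ∧ D.OnPath v) →
    C.edges.Perm D.edges

def Hereditary (H : Set Γ.V) : Prop := ∀ u v : Γ.V, u ∈ H → Γ.Reaches u v → v ∈ H

def Saturated (H : Set Γ.V) : Prop :=
  ∀ v : Γ.V, ¬ Γ.IsSink v → {e : Γ.E | Γ.s e = v}.Finite →
    (∀ e : Γ.E, Γ.s e = v → Γ.t e ∈ H) → v ∈ H

/-- The full subgraph of `Γ` on a set `W` of vertices. -/
abbrev restrict (W : Set Γ.V) : DGraph where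
  V := W
  E := {e : Γ.E // Γ.s e ∈ W ∧ Γ.t e ∈ W}
  s e := ⟨Γ.s e.1, e.2.1⟩
  t e := ⟨Γ.t e.1, e.2.2⟩

/-- The defining relations of the Leavitt path algebra, as a relation on the free
algebra on the generators: (V), (E), (CK1) and (CK2) (the latter imposed at every
vertex which is not a sink and emits finitely many arrows). -/
inductive LRel (k : Type) [CommRing k] (Γ : DGraph) :
    FreeAlgebra k (Gen Γ) → FreeAlgebra k (Gen Γ) → Prop
  | vert_idem (v : Γ.V) :
      LRel k Γ (FreeAlgebra.ι k (Gen.vert v) * FreeAlgebra.ι k (Gen.vert v))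
        (FreeAlgebra.ι k (Gen.vert v))
  | vert_orth (v w : Γ.V) : v ≠ w →
      LRel k Γ (FreeAlgebra.ι k (Gen.vert v) * FreeAlgebra.ι k (Gen.vert w)) 0
  | edge_src (e : Γ.E) :
      LRel k Γ (FreeAlgebra.ι k (Gen.vert (Γ.s e)) * FreeAlgebra.ι k (Gen.edge e))
        (FreeAlgebra.ι k (Gen.edge e))
  | edge_trg (e : Γ.E) :
      LRel k Γ (FreeAlgebra.ι k (Gen.edge e) * FreeAlgebra.ι k (Gen.vert (Γ.t e)))
        (FreeAlgebra.ι k (Gen.edge e))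
  | ghost_src (e : Γ.E) :
      LRel k Γ (FreeAlgebra.ι k (Gen.vert (Γ.t e)) * FreeAlgebra.ι k (Gen.ghost e))
        (FreeAlgebra.ι k (Gen.ghost e))
  | ghost_trg (e : Γ.E) :
      LRel k Γ (FreeAlgebra.ι k (Gen.ghost e) * FreeAlgebra.ι k (Gen.vert (Γ.s e)))
        (FreeAlgebra.ι k (Gen.ghost e))
  | ck1_same (e : Γ.E) :
      LRel k Γ (FreeAlgebra.ι k (Gen.ghost e) * FreeAlgebra.ι k (Gen.edge e))
        (FreeAlgebra.ι k (Gen.vert (Γ.t e)))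
  | ck1_diff (e f : Γ.E) : e ≠ f →
      LRel k Γ (FreeAlgebra.ι k (Gen.ghost e) * FreeAlgebra.ι k (Gen.edge f)) 0
  | ck2 (v : Γ.V) (h : {e : Γ.E | Γ.s e = v}.Finite) (hns : ¬ Γ.IsSink v) :
      LRel k Γ (FreeAlgebra.ι k (Gen.vert v))
        (∑ e ∈ h.toFinset, FreeAlgebra.ι k (Gen.edge e) * FreeAlgebra.ι k (Gen.ghost e))

/-- The (unitized) Leavitt path algebra of `Γ` over `k`.  For a digraph with finitely
many vertices, see `LVF` below where additionally `1 = Σ v` is imposed; in general the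
Leavitt path algebra proper is the (non-unital) subalgebra spanned by the nonempty
words in the generators, cf. `lpa`. -/
abbrev LV (k : Type) [CommRing k] (Γ : DGraph) : Type := RingQuot (LRel k Γ)

/-- The image of a generator in the Leavitt path algebra. -/
def genL (k : Type) [CommRing k] (Γ : DGraph) (g : Gen Γ) : LV k Γ :=
  RingQuot.mkAlgHom k (LRel k Γ) (FreeAlgebra.ι k g)

/-- For `Γ` with finitely many vertices, the relations of the Leavitt path algebra
together with `1 = Σ_{v ∈ V} v`. -/
def LRelU (k : Type) [CommRing k] (Γ : DGraph) [Fintype Γ.V] :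
    FreeAlgebra k (Gen Γ) → FreeAlgebra k (Gen Γ) → Prop :=
  fun a b => LRel k Γ a b ∨
    (a = 1 ∧ b = ∑ v : Γ.V, FreeAlgebra.ι k (Gen.vert v))

/-- The Leavitt path algebra of a digraph with finitely many vertices (a unital
algebra, with `1 = Σ_{v ∈ V} v`). -/
abbrev LVF (k : Type) [CommRing k] (Γ : DGraph) [Fintype Γ.V] : Type :=
  RingQuot (LRelU k Γ)

def genF (k : Type) [CommRing k] (Γ : DGraph) [Fintype Γ.V] (g : Gen Γ) : LVF k Γ :=
  RingQuot.mkAlgHom k (LRelU k Γ) (FreeAlgebra.ι k g)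

section Words

variable {k : Type} [CommRing k] {A : Type} [Ring A]

/-- The element `v e₁ ⋯ e_n` of an algebra `A`, given an interpretation `g` of the
generators. -/
def wordElem (g : Gen Γ → A) (v : Γ.V) (l : List Γ.E) : A :=
  g (Gen.vert v) * (l.map fun e => g (Gen.edge e)).prod

/-- The element `e_n* ⋯ e₁* v`. -/
def wordStar (g : Gen Γ → A) (v : Γ.V) (l : List Γ.E) : A :=
  (l.reverse.map fun e => g (Gen.ghost e)).prod * g (Gen.vert v)

variable {Γ}

/-- The element of the algebra corresponding to a path `p`. -/
def pElem (g : Gen Γ → A) (p : Path Γ) : A := wordElem Γ g p.src p.edges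

/-- The element of the algebra corresponding to the dual path `p*`. -/
def pStar (g : Gen Γ → A) (p : Path Γ) : A := wordStar Γ g p.src p.edges

/-- `Cⁿ` for `n ∈ ℤ`, with `C⁰ := s(C)` and `C⁻ⁿ := (C*)ⁿ`. -/
def cycPow (g : Gen Γ → A) (C : Path Γ) (n : ℤ) : A :=
  if n = 0 then g (Gen.vert C.src)
  else if 0 < n then pElem g C ^ n.toNat
  else pStar g C ^ (-n).toNat

end Words

/-- The k-submodule of the unitized algebra `LV k Γ` spanned by the nonempty words
in the generators: this is the Leavitt path algebra proper (a two-sided ideal). -/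
def lpa (k : Type) [CommRing k] (Γ : DGraph) : Submodule k (LV k Γ) :=
  Submodule.span k
    {x : LV k Γ | ∃ l : List (Gen Γ), l ≠ [] ∧ x = (l.map (genL k Γ)).prod}

/-- The image of the path algebra `kΓ` in `LV k Γ`: the k-span of the paths. -/
def pathSpan (k : Type) [CommRing k] (Γ : DGraph) : Submodule k (LV k Γ) :=
  Submodule.span k (Set.range (pElem (genL k Γ)))

/-- The right ideal generated by an element `a` of a ring `A` (a submodule for the
right action of `A`, i.e. an `Aᵐᵒᵖ`-submodule). -/
def rIdeal (A : Type) [Ring A] (a : A) : Submodule Aᵐᵒᵖ A :=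
  Submodule.span Aᵐᵒᵖ {a}

/-- A right `LV k Γ`-module (i.e. left `(LV k Γ)ᵐᵒᵖ`-module) is unital if
`M = M ⬝ L(Γ)`, equivalently every element is a finite sum of elements of `M·v·L`. -/
def IsUnitalMod (k : Type) [CommRing k] (Γ : DGraph) (M : Type) [AddCommGroup M]
    [Module (LV k Γ)ᵐᵒᵖ M] : Prop :=
  ∀ m : M, m ∈ Submodule.span (LV k Γ)ᵐᵒᵖ
    {x : M | ∃ (v : Γ.V) (y : M), x = (MulOpposite.op (genL k Γ (Gen.vert v))) • y}

/-- One-step reduction of `Γ` at a loopless vertex `v`: paths of length two through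
`v` become new arrows, and `v` together with all arrows touching it is deleted. -/
abbrev reduceAt (v : Γ.V) (hl : ∀ e : Γ.E, Γ.s e = v → Γ.t e ≠ v) : DGraph where
  V := {u : Γ.V // u ≠ v}
  E := {e : Γ.E // Γ.s e ≠ v ∧ Γ.t e ≠ v} ⊕
       {fg : Γ.E × Γ.E // Γ.t fg.1 = v ∧ Γ.s fg.2 = v}
  s := fun x => match x with
    | Sum.inl e => ⟨Γ.s e.1, e.2.1⟩
    | Sum.inr fg => ⟨Γ.s fg.1.1, fun h => hl fg.1.1 h fg.2.1⟩
  t := fun x => match x with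
    | Sum.inl e => ⟨Γ.t e.1, e.2.2⟩
    | Sum.inr fg => ⟨Γ.t fg.1.2, fun h => hl fg.1.2 fg.2.2 h⟩

/-- The homogeneous component of degree `g` of `LV k Γ` with respect to a degree
assignment `d` on the generators, with values in a group `G`. -/
def gcomp (k : Type) [CommRing k] (Γ : DGraph) {G : Type} [Group G]
    (d : Gen Γ → G) (g : G) : Submodule k (LV k Γ) :=
  Submodule.span k
    {x : LV k Γ | ∃ l : List (Gen Γ), (l.map d).prod = g ∧ x = (l.map (genL k Γ)).prod}

/-- The universal degree assignment, with values in the free group on the arrows. -/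
def dUniv (Γ : DGraph) : Gen Γ → FreeGroup Γ.E
  | Gen.vert _ => 1
  | Gen.edge e => FreeGroup.of e
  | Gen.ghost e => (FreeGroup.of e)⁻¹

end DGraph

/-- Gelfand–Kirillov dimension of an `F`-algebra (value in `ℝ≥0∞`):
`limsup_n log dim(Wⁿ)/log n` for a finite-dimensional generating subspace `W`
containing `1` (the supremum is taken over all such `W`; for a finitely generated
algebra the value does not depend on the choice). -/
noncomputable def gkDim (F A : Type) [Field F] [Ring A] [Algebra F A] : ENNReal :=
  ⨆ W : {W : Submodule F A //
      FiniteDimensional F W ∧ (1 : A) ∈ W ∧ ∀ x : A, ∃ n : ℕ, x ∈ (W : Submodule F A) ^ n},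
    Filter.limsup (fun n : ℕ =>
      ENNReal.ofReal
        (Real.log (Module.finrank F ↥((W : Submodule F A) ^ n)) / Real.log n))
      Filter.atTop

/-- A module is indecomposable if it is nonzero and admits no nontrivial direct sum
decomposition. -/
def IsIndecomposableModule (R M : Type) [Ring R] [AddCommGroup M] [Module R M] : Prop :=
  Nontrivial M ∧ ∀ A B : Submodule R M, IsCompl A B → A = ⊥ ∨ B = ⊥


/-!
Every vertex of a cycle `C` without exits emits exactly one arrow, so (CK2) reads `e e* = s(e)`
along `C`; with (CK1) this gives `C C* = v = C* C`, i.e. `C*` is a unit of the corner `v L v`,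
which yields the morphism `k[x, x⁻¹] → v L v`, `x ↦ C*`. It is onto because `L` is spanned by
`1` and the monomials `μ ν*`, and a path starting at `v` can only run around `C`, so `v μ ν* v`
is `0` or a product of powers of `C` and `C*`. It is injective because `L` acts on the free
module over the infinite paths that end by running around `C`, each marked with a winding number,
and there `(C*)ⁿ` shifts the winding number of `C^∞` by `-n`.
-/

theorem Subsemigroup.smul_mem_corner {k A : Type*} [CommRing k] [Ring A] [Algebra k A] {e : A}
    (r : k) {x : A} (hx : x ∈ Subsemigroup.corner e) : r • x ∈ Subsemigroup.corner e := by
  obtain ⟨a, rfl⟩ := hx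
  exact ⟨r • a, by simp only [mul_smul_comm, smul_mul_assoc]⟩

namespace IsIdempotentElem

variable {k A : Type*} [CommRing k] [Ring A] [Algebra k A] {e : A} (he : IsIdempotentElem e)

noncomputable instance : Algebra k he.Corner where
  smul r x := ⟨r • x.1, Subsemigroup.smul_mem_corner r x.2⟩
  algebraMap :=
    { toFun r := ⟨r • e, Subsemigroup.smul_mem_corner r (1 : he.Corner).2⟩
      map_one' := Subtype.ext (one_smul k e)
      map_mul' r s := Subtype.ext <| by
        change (r * s) • e = (r • e) * (s • e)
        rw [smul_mul_smul_comm, he.eq]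
      map_zero' := Subtype.ext (zero_smul k e)
      map_add' r s := Subtype.ext (add_smul r s e) }
  commutes' r x := Subtype.ext <| by
    change (r • e) * x.1 = x.1 * (r • e)
    have hx := (Subsemigroup.mem_corner_iff he).1 x.2
    rw [smul_mul_assoc, mul_smul_comm, hx.1, hx.2]
  smul_def' r x := Subtype.ext <| by
    change r • x.1 = (r • e) * x.1
    rw [smul_mul_assoc, ((Subsemigroup.mem_corner_iff he).1 x.2).1]

variable (k) in
def cornerSubtype : he.Corner →ₙₐ[k] A where
  toFun x := x.1
  map_smul' _ _ := rfl
  map_zero' := rfl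
  map_add' _ _ := rfl
  map_mul' _ _ := rfl

theorem cornerSubtype_injective : Function.Injective (he.cornerSubtype k) :=
  Subtype.val_injective

theorem range_cornerSubtype : Set.range (he.cornerSubtype k) = Set.range (e * · * e) :=
  Subtype.range_val

end IsIdempotentElem

namespace LaurentPolynomial

variable {k B : Type*} [CommRing k] [Ring B] [Algebra k B]

noncomputable def aevalUnit (u : Bˣ) : LaurentPolynomial k →ₐ[k] B :=
  AddMonoidAlgebra.lift k B ℤ ((Units.coeHom B).comp (zpowersHom Bˣ u))

theorem aevalUnit_T (u : Bˣ) (n : ℤ) : aevalUnit u (T n : LaurentPolynomial k) = ↑(u ^ n) := by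
  rw [aevalUnit, T, AddMonoidAlgebra.lift_single, one_smul]
  rfl

theorem aevalUnit_eq_linearCombination (u : Bˣ) (f : LaurentPolynomial k) :
    aevalUnit u f = Finsupp.linearCombination k (fun n : ℤ => (↑(u ^ n) : B)) f.coeff := by
  rw [aevalUnit, AddMonoidAlgebra.lift_apply, Finsupp.linearCombination_apply]
  rfl

theorem aevalUnit_injective {u : Bˣ} (h : LinearIndependent k fun n : ℤ => (↑(u ^ n) : B)) :
    Function.Injective (aevalUnit (k := k) u) := fun f g hfg => by
  simp only [aevalUnit_eq_linearCombination] at hfg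
  exact AddMonoidAlgebra.coeff_injective (h hfg)

theorem aevalUnit_surjective {u : Bˣ}
    (h : Submodule.span k (Set.range fun n : ℤ => (↑(u ^ n) : B)) = ⊤) :
    Function.Surjective (aevalUnit (k := k) u) := fun x => by
  have hx : x ∈ LinearMap.range (Finsupp.linearCombination k fun n : ℤ => (↑(u ^ n) : B)) := by
    rw [Finsupp.range_linearCombination, h]
    exact Submodule.mem_top
  obtain ⟨f, rfl⟩ := hx
  exact ⟨AddMonoidAlgebra.ofCoeff f, aevalUnit_eq_linearCombination u _⟩

end LaurentPolynomial

namespace Finsupp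

variable {k S T U : Type*} [Semiring k]

noncomputable def lmapPartial (f : S → Option T) : (S →₀ k) →ₗ[k] (T →₀ k) :=
  Finsupp.lift (T →₀ k) k S fun z => (f z).elim 0 (single · 1)

theorem lmapPartial_single (f : S → Option T) (z : S) (a : k) :
    lmapPartial f (single z a) = (f z).elim 0 (single · a) := by
  rw [lmapPartial, Finsupp.lift_apply, sum_single_index (by rw [zero_smul])]
  cases f z <;> simp

theorem lmapPartial_comp (f : T → Option U) (g : S → Option T) :
    lmapPartial (k := k) f ∘ₗ lmapPartial g = lmapPartial fun z => (g z).bind f := by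
  refine lhom_ext fun z a => ?_
  rw [LinearMap.comp_apply, lmapPartial_single, lmapPartial_single]
  cases g z <;> simp [lmapPartial_single]

theorem lmapPartial_none : lmapPartial (k := k) (fun _ : S => (none : Option T)) = 0 :=
  lhom_ext fun z a => by rw [lmapPartial_single, Option.elim_none, LinearMap.zero_apply]

theorem sum_lmapPartial {ι : Type*} (s : Finset ι) (g : ι → S → Option T) (f : S → Option T)
    (h : ∀ z, ((∀ i ∈ s, g i z = none) ∧ f z = none) ∨
      ∃ i ∈ s, g i z = f z ∧ ∀ j ∈ s, j ≠ i → g j z = none) :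
    ∑ i ∈ s, lmapPartial (k := k) (g i) = lmapPartial f := by
  refine lhom_ext fun z a => ?_
  rw [LinearMap.sum_apply]
  rcases h z with ⟨hg, hf⟩ | ⟨i, hi, hgi, hg⟩
  · rw [Finset.sum_eq_zero fun i hi => by rw [lmapPartial_single, hg i hi, Option.elim_none],
      lmapPartial_single, hf, Option.elim_none]
  · rw [Finset.sum_eq_single_of_mem i hi fun j hj hji => by
      rw [lmapPartial_single, hg j hj hji, Option.elim_none], lmapPartial_single,
      lmapPartial_single, hgi]

end Finsupp

namespace DGraph

open scoped Classical

variable {Γ : DGraph}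

/-! ### Walks and cycles without exits -/

theorem isWalkFrom_append {v : Γ.V} {l₁ l₂ : List Γ.E} :
    Γ.IsWalkFrom v (l₁ ++ l₂) ↔ Γ.IsWalkFrom v l₁ ∧ Γ.IsWalkFrom (Γ.walkTrg v l₁) l₂ := by
  induction l₁ generalizing v with
  | nil => simp [IsWalkFrom, walkTrg]
  | cons e l ih => simp [IsWalkFrom, walkTrg, ih, and_assoc]

theorem walkTrg_append (v : Γ.V) (l₁ l₂ : List Γ.E) :
    Γ.walkTrg v (l₁ ++ l₂) = Γ.walkTrg (Γ.walkTrg v l₁) l₂ := by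
  induction l₁ generalizing v with
  | nil => rfl
  | cons e l ih => exact ih _

theorem isWalkFrom_take {v : Γ.V} {l : List Γ.E} (hl : Γ.IsWalkFrom v l) (r : ℕ) :
    Γ.IsWalkFrom v (l.take r) :=
  (isWalkFrom_append.1 ((List.take_append_drop r l).symm ▸ hl)).1

theorem src_getElem_eq_walkTrg_take {v : Γ.V} {l : List Γ.E} (hl : Γ.IsWalkFrom v l)
    {i : ℕ} (hi : i < l.length) : Γ.s l[i] = Γ.walkTrg v (l.take i) := by
  have hw := (isWalkFrom_append.1 (List.take_append_drop i l ▸ hl)).2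
  rw [List.drop_eq_getElem_cons hi] at hw
  exact hw.1

theorem walkTrg_take_add_one {v : Γ.V} {l : List Γ.E} {i : ℕ} (hi : i < l.length) :
    Γ.walkTrg v (l.take (i + 1)) = Γ.t l[i] := by
  rw [List.take_add_one, walkTrg_append, List.getElem?_eq_getElem hi]
  rfl

theorem Path.onPath_src_of_mem (p : Path Γ) {e : Γ.E} (he : e ∈ p.edges) :
    p.OnPath (Γ.s e) := by
  obtain ⟨i, hi, rfl⟩ := List.getElem_of_mem he
  rw [src_getElem_eq_walkTrg_take p.valid hi]
  rcases i with _ | i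
  · exact Or.inl rfl
  · exact Or.inr ⟨p.edges[i], List.getElem_mem _, (walkTrg_take_add_one (by omega)).symm⟩

theorem Path.onPath_trg_of_mem (p : Path Γ) {e : Γ.E} (he : e ∈ p.edges) :
    p.OnPath (Γ.t e) := Or.inr ⟨e, he, rfl⟩

variable {C : Path Γ}

theorem Path.IsCycle.walkTrg_edges (hC : C.IsCycle) : Γ.walkTrg C.src C.edges = C.src := hC.2.1

theorem Path.IsCycle.eq_of_src_eq (hC : C.IsCycle) {e f : Γ.E} (he : e ∈ C.edges)
    (hf : f ∈ C.edges) (h : Γ.s e = Γ.s f) : e = f :=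
  List.inj_on_of_nodup_map hC.2.2 he hf h

theorem Path.IsCycle.eq_of_walkTrg_take_eq (hC : C.IsCycle) {i j : ℕ}
    (hi : i < C.edges.length) (hj : j < C.edges.length)
    (h : Γ.walkTrg C.src (C.edges.take i) = Γ.walkTrg C.src (C.edges.take j)) : i = j := by
  rw [← src_getElem_eq_walkTrg_take C.valid hi, ← src_getElem_eq_walkTrg_take C.valid hj] at h
  rwa [← List.getElem_map Γ.s (h := by simpa), ← List.getElem_map Γ.s (h := by simpa),
    hC.2.2.getElem_inj_iff] at h

theorem Path.IsCycle.exists_mem_src_eq (hC : C.IsCycle) {w : Γ.V} (hw : C.OnPath w) :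
    ∃ e ∈ C.edges, Γ.s e = w := by
  have hhead : ∃ e ∈ C.edges, Γ.s e = C.src := by
    obtain ⟨e, l, hl⟩ := List.exists_cons_of_ne_nil hC.1
    have hv := C.valid
    rw [hl] at hv
    exact ⟨e, hl ▸ List.mem_cons_self, hv.1⟩
  rcases hw with rfl | ⟨e, he, rfl⟩
  · exact hhead
  obtain ⟨i, hi, rfl⟩ := List.getElem_of_mem he
  have hnext : Γ.walkTrg C.src (C.edges.take (i + 1)) = Γ.t C.edges[i] := walkTrg_take_add_one hi
  by_cases hi' : i + 1 < C.edges.length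
  · exact ⟨C.edges[i + 1], List.getElem_mem _,
      (src_getElem_eq_walkTrg_take C.valid hi').trans hnext⟩
  · rw [List.take_of_length_le (by omega), hC.walkTrg_edges] at hnext
    exact hnext ▸ hhead

theorem Path.IsCycle.isWalkFrom_flatten_replicate (hC : C.IsCycle) (i : ℕ) :
    Γ.IsWalkFrom C.src (List.replicate i C.edges).flatten := by
  induction i with
  | zero => trivial
  | succ i ih =>
    rw [List.replicate_succ, List.flatten_cons, isWalkFrom_append, hC.walkTrg_edges]
    exact ⟨C.valid, ih⟩

theorem Path.IsCycle.walkTrg_flatten_replicate (hC : C.IsCycle) (i : ℕ) :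
    Γ.walkTrg C.src (List.replicate i C.edges).flatten = C.src := by
  induction i with
  | zero => rfl
  | succ i ih => rw [List.replicate_succ, List.flatten_cons, walkTrg_append, hC.walkTrg_edges, ih]

theorem NoExit.eq_of_src_eq (hC : C.IsCycle) (hne : NoExit C) {e f : Γ.E} (he : e ∈ C.edges)
    (h : Γ.s f = Γ.s e) : f = e :=
  hC.eq_of_src_eq (hne f (h ▸ C.onPath_src_of_mem he)) he h

theorem NoExit.eq_of_isWalkFrom (hC : C.IsCycle) (hne : NoExit C) {w : Γ.V} (hw : C.OnPath w)
    {l l' : List Γ.E} (hl : Γ.IsWalkFrom w l) (hl' : Γ.IsWalkFrom w l')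
    (hlen : l.length = l'.length) : l = l' := by
  induction l generalizing w l' with
  | nil => exact (List.length_eq_zero_iff.1 hlen.symm).symm
  | cons e l ih =>
    obtain _ | ⟨e', l'⟩ := l'
    · simp at hlen
    have he : e ∈ C.edges := hne e (hl.1 ▸ hw)
    obtain rfl : e' = e := hne.eq_of_src_eq hC he (hl'.1.trans hl.1.symm)
    exact congrArg _ (ih (C.onPath_trg_of_mem he) hl.2 hl'.2 (by simpa using hlen))

theorem NoExit.exists_eq_flatten_replicate_append_take (hC : C.IsCycle) (hne : NoExit C)
    {l : List Γ.E} (hl : Γ.IsWalkFrom C.src l) :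
    ∃ i r, r < C.edges.length ∧ l = (List.replicate i C.edges).flatten ++ C.edges.take r := by
  induction hn : l.length using Nat.strong_induction_on generalizing l with
  | _ n ih =>
    have hpos : 0 < C.edges.length := List.length_pos_iff.2 hC.1
    by_cases hlt : l.length < C.edges.length
    · exact ⟨0, l.length, hlt, hne.eq_of_isWalkFrom hC (Or.inl rfl) hl (isWalkFrom_take C.valid _)
        (by simp [hlt.le])⟩
    obtain ⟨hfirst, hrest⟩ :=
      isWalkFrom_append.1 ((List.take_append_drop C.edges.length l).symm ▸ hl)
    have htake : l.take C.edges.length = C.edges :=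
      hne.eq_of_isWalkFrom hC (Or.inl rfl) hfirst C.valid (by simp; omega)
    rw [htake, hC.walkTrg_edges] at hrest
    obtain ⟨i, r, hr, hdrop⟩ := ih _ (by rw [← hn, List.length_drop]; omega) hrest rfl
    refine ⟨i + 1, r, hr, ?_⟩
    rw [← List.take_append_drop C.edges.length l, htake, hdrop, List.replicate_succ,
      List.flatten_cons, List.append_assoc]

/-! ### Computations in the Leavitt path algebra -/

section Relations

variable (k : Type) [CommRing k]

theorem vert_mul_vert (u w : Γ.V) :
    genL k Γ (.vert u) * genL k Γ (.vert w) = if u = w then genL k Γ (.vert u) else 0 := by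
  split_ifs with h
  · subst h
    simpa [genL] using RingQuot.mkAlgHom_rel k (LRel.vert_idem (k := k) u)
  · simpa [genL] using RingQuot.mkAlgHom_rel k (LRel.vert_orth (k := k) u w h)

theorem isIdempotentElem_genL_vert (v : Γ.V) : IsIdempotentElem (genL k Γ (.vert v)) := by
  rw [IsIdempotentElem, vert_mul_vert, if_pos rfl]

theorem vert_mul_edge (u : Γ.V) (e : Γ.E) :
    genL k Γ (.vert u) * genL k Γ (.edge e) = if u = Γ.s e then genL k Γ (.edge e) else 0 := by
  have he : genL k Γ (.vert (Γ.s e)) * genL k Γ (.edge e) = genL k Γ (.edge e) := by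
    simpa [genL] using RingQuot.mkAlgHom_rel k (LRel.edge_src (k := k) e)
  rw [← he, ← mul_assoc, vert_mul_vert]
  split_ifs with h
  · rw [h]
  · rw [zero_mul]

theorem edge_mul_vert (e : Γ.E) (u : Γ.V) :
    genL k Γ (.edge e) * genL k Γ (.vert u) = if Γ.t e = u then genL k Γ (.edge e) else 0 := by
  have he : genL k Γ (.edge e) * genL k Γ (.vert (Γ.t e)) = genL k Γ (.edge e) := by
    simpa [genL] using RingQuot.mkAlgHom_rel k (LRel.edge_trg (k := k) e)
  rw [← he, mul_assoc, vert_mul_vert]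
  split_ifs with h
  · rw [h]
  · rw [mul_zero]

theorem vert_mul_ghost (u : Γ.V) (e : Γ.E) :
    genL k Γ (.vert u) * genL k Γ (.ghost e) = if u = Γ.t e then genL k Γ (.ghost e) else 0 := by
  have he : genL k Γ (.vert (Γ.t e)) * genL k Γ (.ghost e) = genL k Γ (.ghost e) := by
    simpa [genL] using RingQuot.mkAlgHom_rel k (LRel.ghost_src (k := k) e)
  rw [← he, ← mul_assoc, vert_mul_vert]
  split_ifs with h
  · rw [h]
  · rw [zero_mul]

theorem ghost_mul_vert (e : Γ.E) (u : Γ.V) :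
    genL k Γ (.ghost e) * genL k Γ (.vert u) = if Γ.s e = u then genL k Γ (.ghost e) else 0 := by
  have he : genL k Γ (.ghost e) * genL k Γ (.vert (Γ.s e)) = genL k Γ (.ghost e) := by
    simpa [genL] using RingQuot.mkAlgHom_rel k (LRel.ghost_trg (k := k) e)
  rw [← he, mul_assoc, vert_mul_vert]
  split_ifs with h
  · rw [h]
  · rw [mul_zero]

theorem ghost_mul_edge (e f : Γ.E) :
    genL k Γ (.ghost e) * genL k Γ (.edge f) =
      if e = f then genL k Γ (.vert (Γ.t e)) else 0 := by
  split_ifs with h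
  · subst h
    simpa [genL] using RingQuot.mkAlgHom_rel k (LRel.ck1_same (k := k) e)
  · simpa [genL] using RingQuot.mkAlgHom_rel k (LRel.ck1_diff (k := k) e f h)

theorem edge_mul_ghost_of_unique {e : Γ.E} (h : ∀ f, Γ.s f = Γ.s e → f = e) :
    genL k Γ (.edge e) * genL k Γ (.ghost e) = genL k Γ (.vert (Γ.s e)) := by
  have hfin : {f | Γ.s f = Γ.s e}.Finite := (Set.finite_singleton e).subset fun f hf => h f hf
  have hset : hfin.toFinset = {e} := by
    ext f
    simpa using ⟨h f, fun hf => hf ▸ rfl⟩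
  have hck2 := RingQuot.mkAlgHom_rel k (LRel.ck2 (k := k) (Γ.s e) hfin fun hs => hs e rfl)
  rw [hset, Finset.sum_singleton] at hck2
  simpa [genL] using hck2.symm

end Relations

section Words

variable {k : Type} [CommRing k]

theorem wordElem_nil (v : Γ.V) : wordElem Γ (genL k Γ) v [] = genL k Γ (.vert v) := by
  simp [wordElem]

theorem wordStar_nil (v : Γ.V) : wordStar Γ (genL k Γ) v [] = genL k Γ (.vert v) := by
  simp [wordStar]

theorem wordElem_cons (v : Γ.V) (e : Γ.E) (l : List Γ.E) :
    wordElem Γ (genL k Γ) v (e :: l) =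
      genL k Γ (.vert v) * genL k Γ (.edge e) * wordElem Γ (genL k Γ) (Γ.t e) l := by
  simp only [wordElem, List.map_cons, List.prod_cons]
  rw [mul_assoc (genL k Γ (.vert v)), ← mul_assoc (genL k Γ (.edge e)), edge_mul_vert, if_pos rfl]

theorem wordStar_cons (v : Γ.V) (e : Γ.E) (l : List Γ.E) :
    wordStar Γ (genL k Γ) v (e :: l) =
      wordStar Γ (genL k Γ) (Γ.t e) l * genL k Γ (.ghost e) * genL k Γ (.vert v) := by
  simp only [wordStar, List.reverse_cons, List.map_append, List.prod_append, List.map_cons,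
    List.map_nil, List.prod_cons, List.prod_nil, mul_one]
  rw [mul_assoc _ (genL k Γ (.vert (Γ.t e))), vert_mul_ghost, if_pos rfl]

theorem vert_mul_wordElem (u v : Γ.V) (l : List Γ.E) :
    genL k Γ (.vert u) * wordElem Γ (genL k Γ) v l =
      if u = v then wordElem Γ (genL k Γ) v l else 0 := by
  rw [wordElem, ← mul_assoc, vert_mul_vert]
  split_ifs with h
  · rw [h]
  · rw [zero_mul]

theorem wordStar_mul_vert (v u : Γ.V) (l : List Γ.E) :
    wordStar Γ (genL k Γ) v l * genL k Γ (.vert u) =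
      if v = u then wordStar Γ (genL k Γ) v l else 0 := by
  rw [wordStar, mul_assoc, vert_mul_vert]
  split_ifs with h
  · rw [h]
  · rw [mul_zero]

theorem wordElem_mul_vert {v : Γ.V} {l : List Γ.E} (hl : Γ.IsWalkFrom v l) (u : Γ.V) :
    wordElem Γ (genL k Γ) v l * genL k Γ (.vert u) =
      if Γ.walkTrg v l = u then wordElem Γ (genL k Γ) v l else 0 := by
  induction l generalizing v with
  | nil => rw [wordElem_nil, vert_mul_vert]; rfl
  | cons e l ih =>
    rw [wordElem_cons, mul_assoc, ih hl.2, mul_ite, mul_zero]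
    rfl

theorem vert_mul_wordStar {v : Γ.V} {l : List Γ.E} (hl : Γ.IsWalkFrom v l) (u : Γ.V) :
    genL k Γ (.vert u) * wordStar Γ (genL k Γ) v l =
      if u = Γ.walkTrg v l then wordStar Γ (genL k Γ) v l else 0 := by
  induction l generalizing v with
  | nil =>
    rw [wordStar_nil, vert_mul_vert]
    show (if u = v then _ else _) = if u = v then _ else _
    split_ifs with h
    · rw [h]
    · rfl
  | cons e l ih =>
    rw [wordStar_cons, ← mul_assoc, ← mul_assoc, ih hl.2, ite_mul, ite_mul, zero_mul, zero_mul]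
    rfl

theorem wordElem_append {v : Γ.V} {l₁ : List Γ.E} (hl : Γ.IsWalkFrom v l₁) (l₂ : List Γ.E) :
    wordElem Γ (genL k Γ) v (l₁ ++ l₂) =
      wordElem Γ (genL k Γ) v l₁ * wordElem Γ (genL k Γ) (Γ.walkTrg v l₁) l₂ := by
  have h := wordElem_mul_vert (k := k) hl (Γ.walkTrg v l₁)
  rw [if_pos rfl] at h
  simp only [wordElem] at h ⊢
  rw [List.map_append, List.prod_append, ← mul_assoc (genL k Γ (.vert v) * _), h, mul_assoc]

theorem wordStar_append {v : Γ.V} {l₁ : List Γ.E} (hl : Γ.IsWalkFrom v l₁) (l₂ : List Γ.E) :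
    wordStar Γ (genL k Γ) v (l₁ ++ l₂) =
      wordStar Γ (genL k Γ) (Γ.walkTrg v l₁) l₂ * wordStar Γ (genL k Γ) v l₁ := by
  have h := vert_mul_wordStar (k := k) hl (Γ.walkTrg v l₁)
  rw [if_pos rfl] at h
  simp only [wordStar] at h ⊢
  rw [List.reverse_append, List.map_append, List.prod_append, mul_assoc _ (genL k Γ _), h,
    mul_assoc]

theorem wordStar_mul_wordElem {v : Γ.V} {l : List Γ.E} (hl : Γ.IsWalkFrom v l) :
    wordStar Γ (genL k Γ) v l * wordElem Γ (genL k Γ) v l = genL k Γ (.vert (Γ.walkTrg v l)) := by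
  induction l generalizing v with
  | nil => rw [wordStar_nil, wordElem_nil, vert_mul_vert, if_pos rfl]; rfl
  | cons e l ih =>
    rw [wordStar_cons, wordElem_cons, ← hl.1]
    simp only [mul_assoc]
    rw [← mul_assoc (genL k Γ (.vert (Γ.s e))), vert_mul_vert, if_pos rfl,
      ← mul_assoc (genL k Γ (.vert (Γ.s e))), vert_mul_edge, if_pos rfl,
      ← mul_assoc (genL k Γ (.ghost e)), ghost_mul_edge, if_pos rfl,
      vert_mul_wordElem, if_pos rfl, ih hl.2]
    rfl

theorem wordElem_mul_wordStar {v : Γ.V} {l : List Γ.E} (hl : Γ.IsWalkFrom v l)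
    (huniq : ∀ e ∈ l, ∀ f, Γ.s f = Γ.s e → f = e) :
    wordElem Γ (genL k Γ) v l * wordStar Γ (genL k Γ) v l = genL k Γ (.vert v) := by
  induction l generalizing v with
  | nil => rw [wordStar_nil, wordElem_nil, vert_mul_vert, if_pos rfl]
  | cons e l ih =>
    rw [wordStar_cons, wordElem_cons, ← hl.1]
    simp only [mul_assoc]
    rw [← mul_assoc (wordElem Γ _ _ l), ih hl.2 fun f hf => huniq f (List.mem_cons_of_mem e hf),
      ← mul_assoc (genL k Γ (.edge e)), edge_mul_vert, if_pos rfl,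
      ← mul_assoc (genL k Γ (.edge e)), edge_mul_ghost_of_unique k (huniq e List.mem_cons_self),
      vert_mul_vert, if_pos rfl, vert_mul_vert, if_pos rfl]

theorem wordElem_concat (v : Γ.V) (l : List Γ.E) (f : Γ.E) :
    wordElem Γ (genL k Γ) v (l ++ [f]) = wordElem Γ (genL k Γ) v l * genL k Γ (.edge f) := by
  simp [wordElem, mul_assoc]

theorem wordElem_mul_edge {v : Γ.V} {l : List Γ.E} (hl : Γ.IsWalkFrom v l) (f : Γ.E) :
    wordElem Γ (genL k Γ) v l * genL k Γ (.edge f) =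
      if Γ.walkTrg v l = Γ.s f then wordElem Γ (genL k Γ) v (l ++ [f]) else 0 := by
  rw [wordElem_concat]
  split_ifs with h
  · rfl
  · have hf := vert_mul_edge k (Γ.s f) f
    rw [if_pos rfl] at hf
    rw [← hf, ← mul_assoc, wordElem_mul_vert hl, if_neg h, zero_mul]

theorem wordStar_mul_ghost (w : Γ.V) (m : List Γ.E) (e : Γ.E) :
    wordStar Γ (genL k Γ) w m * genL k Γ (.ghost e) =
      if w = Γ.t e then wordStar Γ (genL k Γ) (Γ.s e) (e :: m) else 0 := by
  rw [wordStar_cons, wordStar, wordStar, mul_assoc _ (genL k Γ (.vert w)), vert_mul_ghost,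
    mul_assoc _ (genL k Γ (.vert (Γ.t e))), vert_mul_ghost, if_pos rfl, mul_assoc _ _
      (genL k Γ (.vert (Γ.s e))), ghost_mul_vert, if_pos rfl, mul_ite, mul_zero]

theorem wordStar_cons_mul_edge {w : Γ.V} {e : Γ.E} {m : List Γ.E}
    (hm : Γ.IsWalkFrom w (e :: m)) (f : Γ.E) :
    wordStar Γ (genL k Γ) w (e :: m) * genL k Γ (.edge f) =
      if e = f then wordStar Γ (genL k Γ) (Γ.t e) m else 0 := by
  rw [wordStar_cons, mul_assoc, vert_mul_edge]
  split_ifs with hw hef hef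
  · subst hef
    rw [mul_assoc, ghost_mul_edge, if_pos rfl, wordStar_mul_vert, if_pos rfl]
  · rw [mul_assoc, ghost_mul_edge, if_neg hef, mul_zero]
  · exact absurd (hm.1.symm.trans (congrArg Γ.s hef)) hw
  · rw [mul_zero]

/-- The monomials `μ ν*`; the targets of `μ` and `ν` may differ, in which case `μ ν* = 0`. -/
def pathMonomials (k : Type) [CommRing k] (Γ : DGraph) : Set (LV k Γ) :=
  {x | ∃ v l w m, Γ.IsWalkFrom v l ∧ Γ.IsWalkFrom w m ∧
    x = wordElem Γ (genL k Γ) v l * wordStar Γ (genL k Γ) w m}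

theorem genL_mem_pathMonomials (g : Gen Γ) : genL k Γ g ∈ pathMonomials k Γ := by
  cases g with
  | vert u =>
    refine ⟨u, [], u, [], trivial, trivial, ?_⟩
    rw [wordElem_nil, wordStar_nil, vert_mul_vert, if_pos rfl]
  | edge e =>
    refine ⟨Γ.s e, [e], Γ.t e, [], ⟨rfl, trivial⟩, trivial, ?_⟩
    rw [show [e] = [] ++ [e] from rfl, wordElem_concat, wordElem_nil, wordStar_nil, vert_mul_edge,
      if_pos rfl, edge_mul_vert, if_pos rfl]
  | ghost e =>
    refine ⟨Γ.t e, [], Γ.s e, [e], trivial, ⟨rfl, trivial⟩, ?_⟩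
    rw [wordElem_nil, wordStar_cons, wordStar_nil, ← mul_assoc, ← mul_assoc, vert_mul_vert,
      if_pos rfl, vert_mul_ghost, if_pos rfl, ghost_mul_vert, if_pos rfl]

theorem mul_genL_mem_span_pathMonomials {x : LV k Γ} (hx : x ∈ pathMonomials k Γ) (g : Gen Γ) :
    x * genL k Γ g ∈ Submodule.span k (pathMonomials k Γ) := by
  obtain ⟨v, l, w, m, hl, hm, rfl⟩ := hx
  have mem {v l w m} (hl : Γ.IsWalkFrom v l) (hm : Γ.IsWalkFrom w m) :
      wordElem Γ (genL k Γ) v l * wordStar Γ (genL k Γ) w m ∈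
        Submodule.span k (pathMonomials k Γ) :=
    Submodule.subset_span ⟨v, l, w, m, hl, hm, rfl⟩
  rw [mul_assoc]
  cases g with
  | vert u =>
    rw [wordStar_mul_vert]
    split_ifs
    · exact mem hl hm
    · rw [mul_zero]; exact zero_mem _
  | ghost e =>
    rw [wordStar_mul_ghost]
    split_ifs with h
    · exact mem hl ⟨rfl, h ▸ hm⟩
    · rw [mul_zero]; exact zero_mem _
  | edge f =>
    cases m with
    | nil =>
      rw [wordStar_nil, ← mul_assoc, wordElem_mul_vert hl]
      split_ifs with hw
      · rw [wordElem_mul_edge hl]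
        split_ifs with hf
        · have hlf : Γ.IsWalkFrom v (l ++ [f]) := isWalkFrom_append.2 ⟨hl, hf.symm, trivial⟩
          have := wordElem_mul_vert (k := k) hlf (Γ.t f)
          rw [walkTrg_append, if_pos (by rfl), ← wordStar_nil] at this
          rw [← this]
          exact mem hlf trivial
        · exact zero_mem _
      · rw [zero_mul]; exact zero_mem _
    | cons e m =>
      rw [wordStar_cons_mul_edge hm]
      split_ifs
      · exact mem hl hm.2
      · rw [mul_zero]; exact zero_mem _

theorem mul_mem_of_forall_mul_genL_mem (S : Submodule k (LV k Γ))
    (hS : ∀ x ∈ S, ∀ g, x * genL k Γ g ∈ S) {x : LV k Γ} (hx : x ∈ S) (a : LV k Γ) :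
    x * a ∈ S := by
  obtain ⟨z, rfl⟩ := RingQuot.mkAlgHom_surjective k (LRel k Γ) a
  induction z using FreeAlgebra.induction generalizing x with
  | grade0 r =>
    rw [AlgHom.commutes, ← Algebra.commutes, ← Algebra.smul_def]
    exact S.smul_mem r hx
  | grade1 g => exact hS x hx g
  | mul a b ha hb => rw [map_mul, ← mul_assoc]; exact hb (ha hx)
  | add a b ha hb => rw [map_add, mul_add]; exact add_mem (ha hx) (hb hx)

theorem mem_span_one_pathMonomials (a : LV k Γ) :
    a ∈ Submodule.span k (insert 1 (pathMonomials k Γ)) := by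
  have hmono := Submodule.span_mono (R := k) (Set.subset_insert 1 (pathMonomials k Γ))
  refine one_mul a ▸ mul_mem_of_forall_mul_genL_mem _ (fun x hx g => ?_)
    (Submodule.subset_span (Set.mem_insert 1 _)) a
  induction hx using Submodule.span_induction with
  | mem y hy =>
    rcases hy with rfl | hy
    · rw [one_mul]; exact Submodule.subset_span (Or.inr (genL_mem_pathMonomials g))
    · exact hmono (mul_genL_mem_span_pathMonomials hy g)
  | zero => rw [zero_mul]; exact zero_mem _
  | add y z _ _ hy hz => rw [add_mul]; exact add_mem hy hz
  | smul r y _ hy => rw [smul_mul_assoc]; exact Submodule.smul_mem _ r hy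

end Words

/-! ### The corner of a cycle without exits -/

section Corner

variable {k : Type} [CommRing k]

theorem pElem_mem_corner (hC : C.IsCycle) :
    pElem (genL k Γ) C ∈ Subsemigroup.corner (genL k Γ (.vert C.src)) := by
  refine (Subsemigroup.mem_corner_iff (isIdempotentElem_genL_vert k C.src)).2 ⟨?_, ?_⟩
  · rw [pElem, vert_mul_wordElem, if_pos rfl]
  · rw [pElem, wordElem_mul_vert C.valid, if_pos hC.walkTrg_edges]

theorem pStar_mem_corner (hC : C.IsCycle) :
    pStar (genL k Γ) C ∈ Subsemigroup.corner (genL k Γ (.vert C.src)) := by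
  refine (Subsemigroup.mem_corner_iff (isIdempotentElem_genL_vert k C.src)).2 ⟨?_, ?_⟩
  · rw [pStar, vert_mul_wordStar C.valid, if_pos hC.walkTrg_edges.symm]
  · rw [pStar, wordStar_mul_vert, if_pos rfl]

theorem wordElem_take_mul_wordStar_take (hC : C.IsCycle) (hne : NoExit C) {r r' : ℕ}
    (hr : r < C.edges.length) (hr' : r' < C.edges.length) :
    wordElem Γ (genL k Γ) C.src (C.edges.take r) * wordStar Γ (genL k Γ) C.src (C.edges.take r') =
      if r = r' then genL k Γ (.vert C.src) else 0 := by
  split_ifs with h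
  · subst h
    exact wordElem_mul_wordStar (isWalkFrom_take C.valid r) fun e he _ hf =>
      hne.eq_of_src_eq hC (List.mem_of_mem_take he) hf
  · have hw := wordElem_mul_vert (k := k) (isWalkFrom_take C.valid r)
      (Γ.walkTrg C.src (C.edges.take r))
    rw [if_pos rfl] at hw
    rw [← hw, mul_assoc, vert_mul_wordStar (isWalkFrom_take C.valid r'),
      if_neg fun h' => h (hC.eq_of_walkTrg_take_eq hr hr' h'), mul_zero]

variable (k) in
noncomputable def cycleUnit (hC : C.IsCycle) (hne : NoExit C) :
    (isIdempotentElem_genL_vert k C.src).Corner ˣ where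
  val := ⟨pStar (genL k Γ) C, pStar_mem_corner hC⟩
  inv := ⟨pElem (genL k Γ) C, pElem_mem_corner hC⟩
  val_inv := Subtype.ext <| by
    change wordStar Γ _ C.src C.edges * wordElem Γ _ C.src C.edges = genL k Γ (.vert C.src)
    rw [wordStar_mul_wordElem C.valid, hC.walkTrg_edges]
  inv_val := Subtype.ext <|
    wordElem_mul_wordStar C.valid fun _ he _ hf => hne.eq_of_src_eq hC he hf

variable (k) in
noncomputable def cycleZPow (hC : C.IsCycle) (hne : NoExit C) (n : ℤ) : LV k Γ :=
  (isIdempotentElem_genL_vert k C.src).cornerSubtype k ↑(cycleUnit k hC hne ^ n)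

variable (hC : C.IsCycle) (hne : NoExit C)

theorem cycleZPow_add (m n : ℤ) :
    cycleZPow k hC hne (m + n) = cycleZPow k hC hne m * cycleZPow k hC hne n := by
  rw [cycleZPow, zpow_add, Units.val_mul, map_mul]
  rfl

theorem cycleZPow_zero : cycleZPow k hC hne 0 = genL k Γ (.vert C.src) := rfl

theorem cycleZPow_one : cycleZPow k hC hne 1 = pStar (genL k Γ) C := by
  rw [cycleZPow, zpow_one]
  rfl

theorem cycleZPow_neg_one : cycleZPow k hC hne (-1) = pElem (genL k Γ) C := by
  rw [cycleZPow, zpow_neg_one]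
  rfl

theorem cycleZPow_natCast (i : ℕ) :
    cycleZPow k hC hne i = wordStar Γ (genL k Γ) C.src (List.replicate i C.edges).flatten := by
  induction i with
  | zero => exact (wordStar_nil C.src).symm
  | succ i ih =>
    rw [List.replicate_succ, List.flatten_cons, wordStar_append C.valid, hC.walkTrg_edges, ← ih,
      Nat.cast_succ, cycleZPow_add, cycleZPow_one]
    rfl

theorem cycleZPow_neg_natCast (i : ℕ) :
    cycleZPow k hC hne (-i) = wordElem Γ (genL k Γ) C.src (List.replicate i C.edges).flatten := by
  induction i with
  | zero => exact (wordElem_nil C.src).symm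
  | succ i ih =>
    rw [List.replicate_succ, List.flatten_cons, wordElem_append C.valid, hC.walkTrg_edges, ← ih,
      Nat.cast_succ, neg_add_rev, cycleZPow_add, cycleZPow_neg_one]
    rfl

theorem wordElem_mul_wordStar_mem_span_cycleZPow {l m : List Γ.E} (hl : Γ.IsWalkFrom C.src l)
    (hm : Γ.IsWalkFrom C.src m) :
    wordElem Γ (genL k Γ) C.src l * wordStar Γ (genL k Γ) C.src m ∈ Submodule.span k
      (Set.range (cycleZPow k hC hne)) := by
  obtain ⟨i, r, hr, rfl⟩ := hne.exists_eq_flatten_replicate_append_take hC hl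
  obtain ⟨j, r', hr', rfl⟩ := hne.exists_eq_flatten_replicate_append_take hC hm
  rw [wordElem_append (hC.isWalkFrom_flatten_replicate i),
    wordStar_append (hC.isWalkFrom_flatten_replicate j), hC.walkTrg_flatten_replicate,
    hC.walkTrg_flatten_replicate, ← cycleZPow_neg_natCast hC hne,
    ← cycleZPow_natCast hC hne, mul_assoc, ← mul_assoc (wordElem Γ _ _ _),
    wordElem_take_mul_wordStar_take hC hne hr hr']
  split_ifs
  · refine Submodule.subset_span ⟨-(i : ℤ) + j, ?_⟩
    rw [← cycleZPow_zero hC hne, ← cycleZPow_add, ← cycleZPow_add, zero_add]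
  · rw [zero_mul, mul_zero]
    exact zero_mem _

theorem vert_mul_mul_vert_mem_span_cycleZPow (a : LV k Γ) :
    genL k Γ (.vert C.src) * a * genL k Γ (.vert C.src) ∈ Submodule.span k
      (Set.range (cycleZPow k hC hne)) := by
  induction mem_span_one_pathMonomials a using Submodule.span_induction with
  | mem x hx =>
    rcases hx with rfl | ⟨v, l, w, m, hl, hm, rfl⟩
    · rw [mul_one, vert_mul_vert, if_pos rfl]
      exact Submodule.subset_span ⟨0, rfl⟩
    · rw [← mul_assoc, vert_mul_wordElem, mul_assoc, wordStar_mul_vert]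
      split_ifs with hv hw
      · subst hv hw
        exact wordElem_mul_wordStar_mem_span_cycleZPow hC hne hl hm
      all_goals simp
  | zero => simp
  | add x y _ _ hx hy => rw [mul_add, add_mul]; exact add_mem hx hy
  | smul r x _ hx => rw [mul_smul_comm, smul_mul_assoc]; exact Submodule.smul_mem _ r hx

end Corner

/-! ### A representation separating the powers of `C*` -/

section Representation

namespace Path

variable (C) in
def IsEntry (w : Γ.V) (l : List Γ.E) : Prop :=
  Γ.IsWalkFrom w l ∧ (∀ e ∈ l, e ∉ C.edges) ∧ C.OnPath (Γ.walkTrg w l)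

variable (C) in
noncomputable def winding (e : Γ.E) : ℤ := if Γ.s e = C.src then 1 else 0

theorem IsCycle.sum_winding_edges (hC : C.IsCycle) : (C.edges.map C.winding).sum = 1 := by
  obtain ⟨e, l, hl⟩ := List.exists_cons_of_ne_nil hC.1
  have hv := C.valid
  have hnd := hC.2.2
  rw [hl] at hv hnd
  rw [List.map_cons, List.nodup_cons] at hnd
  rw [hl, List.map_cons, List.sum_cons, winding, if_pos hv.1, List.sum_eq_zero]
  · rfl
  · intro x hx
    obtain ⟨f, hf, rfl⟩ := List.mem_map.1 hx
    rw [winding, if_neg fun h => hnd.1 (by rw [hv.1, ← h]; exact List.mem_map_of_mem hf)]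

variable (C) in
/-- A state `(w, l, n)` with `C.IsEntry w l` stands for the infinite path which follows `l` and
then runs around `C` forever, with `n` counting the passages through `C.src` that have been
performed by arrows (or undone by ghost arrows). Other states are killed by every generator. -/
noncomputable def entryAction : Gen Γ → Γ.V × List Γ.E × ℤ → Option (Γ.V × List Γ.E × ℤ)
  | .vert u, (w, l, n) => if C.IsEntry w l ∧ w = u then some (w, l, n) else none
  | .edge e, (w, l, n) =>
    if C.IsEntry w l ∧ Γ.t e = w then
      if e ∈ C.edges then some (Γ.s e, [], n + C.winding e) else some (Γ.s e, e :: l, n)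
    else none
  | .ghost e, (w, [], n) =>
    if e ∈ C.edges ∧ Γ.s e = w then some (Γ.t e, [], n - C.winding e) else none
  | .ghost e, (w, f :: l, n) => if C.IsEntry w (f :: l) ∧ f = e then some (Γ.t e, l, n) else none

theorem IsEntry.cons {w : Γ.V} {l : List Γ.E} (h : C.IsEntry w l) {e : Γ.E} (hew : Γ.t e = w)
    (he : e ∉ C.edges) : C.IsEntry (Γ.s e) (e :: l) := by
  subst hew
  exact ⟨⟨rfl, h.1⟩, List.forall_mem_cons.2 ⟨he, h.2.1⟩, h.2.2⟩

theorem IsEntry.tail {w : Γ.V} {f : Γ.E} {l : List Γ.E} (h : C.IsEntry w (f :: l)) :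
    C.IsEntry (Γ.t f) l :=
  ⟨h.1.2, fun e he => h.2.1 e (List.mem_cons_of_mem f he), h.2.2⟩

theorem isEntry_nil {w : Γ.V} : C.IsEntry w [] ↔ C.OnPath w :=
  ⟨fun h => h.2.2, fun h => ⟨trivial, fun _ h => absurd h List.not_mem_nil, h⟩⟩

theorem IsEntry.eq_nil (hne : NoExit C) {w : Γ.V} {l : List Γ.E} (h : C.IsEntry w l)
    (hw : C.OnPath w) : l = [] := by
  obtain _ | ⟨f, l⟩ := l
  · rfl
  · exact absurd (hne f (h.1.1 ▸ hw)) (h.2.1 f List.mem_cons_self)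

theorem entryAction_vert_self {w : Γ.V} {l : List Γ.E} (h : C.IsEntry w l) (n : ℤ) :
    C.entryAction (.vert w) (w, l, n) = some (w, l, n) :=
  if_pos ⟨h, rfl⟩

theorem entryAction_vert_idem (u : Γ.V) (z : Γ.V × List Γ.E × ℤ) :
    (C.entryAction (.vert u) z).bind (C.entryAction (.vert u)) = C.entryAction (.vert u) z := by
  obtain ⟨w, l, n⟩ := z
  by_cases h : C.IsEntry w l ∧ w = u
  · obtain ⟨h, rfl⟩ := h
    simp [entryAction, h]
  · simp [entryAction, h]

theorem entryAction_vert_orth {u u' : Γ.V} (hu : u ≠ u') (z : Γ.V × List Γ.E × ℤ) :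
    (C.entryAction (.vert u') z).bind (C.entryAction (.vert u)) = none := by
  obtain ⟨w, l, n⟩ := z
  by_cases h : C.IsEntry w l ∧ w = u'
  · obtain ⟨h, rfl⟩ := h
    simp [entryAction, h, hu.symm]
  · simp [entryAction, h]

theorem entryAction_edge_src (e : Γ.E) (z : Γ.V × List Γ.E × ℤ) :
    (C.entryAction (.edge e) z).bind (C.entryAction (.vert (Γ.s e))) =
      C.entryAction (.edge e) z := by
  obtain ⟨w, l, n⟩ := z
  by_cases h : C.IsEntry w l ∧ Γ.t e = w
  · by_cases he : e ∈ C.edges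
    · simp [entryAction, h, he, isEntry_nil.2 (C.onPath_src_of_mem he)]
    · simp [entryAction, h, he, h.1.cons h.2 he]
  · simp [entryAction, h]

theorem entryAction_edge_trg (e : Γ.E) (z : Γ.V × List Γ.E × ℤ) :
    (C.entryAction (.vert (Γ.t e)) z).bind (C.entryAction (.edge e)) =
      C.entryAction (.edge e) z := by
  obtain ⟨w, l, n⟩ := z
  by_cases h : C.IsEntry w l ∧ w = Γ.t e
  · obtain ⟨h, rfl⟩ := h
    simp [entryAction, h]
  · have h' : ¬(C.IsEntry w l ∧ Γ.t e = w) := fun h' => h ⟨h'.1, h'.2.symm⟩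
    simp [entryAction, h, h']

theorem entryAction_ghost_src (e : Γ.E) (z : Γ.V × List Γ.E × ℤ) :
    (C.entryAction (.ghost e) z).bind (C.entryAction (.vert (Γ.t e))) =
      C.entryAction (.ghost e) z := by
  obtain ⟨w, _ | ⟨f, l⟩, n⟩ := z
  · by_cases h : e ∈ C.edges ∧ Γ.s e = w
    · simp [entryAction, h, isEntry_nil.2 (C.onPath_trg_of_mem h.1)]
    · simp [entryAction, h]
  · by_cases h : C.IsEntry w (f :: l) ∧ f = e
    · obtain ⟨h, rfl⟩ := h
      have hg : C.entryAction (.ghost f) (w, f :: l, n) = some (Γ.t f, l, n) := if_pos ⟨h, rfl⟩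
      rw [hg, Option.bind_some]
      exact if_pos ⟨h.tail, rfl⟩
    · simp [entryAction, h]

theorem entryAction_ghost_trg (e : Γ.E) (z : Γ.V × List Γ.E × ℤ) :
    (C.entryAction (.vert (Γ.s e)) z).bind (C.entryAction (.ghost e)) =
      C.entryAction (.ghost e) z := by
  obtain ⟨w, _ | ⟨f, l⟩, n⟩ := z
  · by_cases h : C.IsEntry w [] ∧ w = Γ.s e
    · obtain ⟨h, rfl⟩ := h
      simp [entryAction, h]
    · have h' : ¬(e ∈ C.edges ∧ Γ.s e = w) := fun h' =>
        h ⟨isEntry_nil.2 (h'.2 ▸ C.onPath_src_of_mem h'.1), h'.2.symm⟩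
      simp [entryAction, h, h']
  · by_cases h : C.IsEntry w (f :: l) ∧ w = Γ.s e
    · obtain ⟨h, rfl⟩ := h
      simp [entryAction, h]
    · have h' : ¬(C.IsEntry w (f :: l) ∧ f = e) := fun h' => h ⟨h'.1, h'.2 ▸ h'.1.1.1.symm⟩
      simp [entryAction, h, h']

theorem entryAction_ck1_same (hne : NoExit C) (e : Γ.E) (z : Γ.V × List Γ.E × ℤ) :
    (C.entryAction (.edge e) z).bind (C.entryAction (.ghost e)) =
      C.entryAction (.vert (Γ.t e)) z := by
  obtain ⟨w, l, n⟩ := z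
  by_cases h : C.IsEntry w l ∧ Γ.t e = w
  · obtain ⟨h, rfl⟩ := h
    by_cases he : e ∈ C.edges
    · obtain rfl : l = [] := h.eq_nil hne (C.onPath_trg_of_mem he)
      simp [entryAction, h, he]
    · simp [entryAction, h, he, h.cons rfl he]
  · have h' : ¬(C.IsEntry w l ∧ w = Γ.t e) := fun h' => h ⟨h'.1, h'.2.symm⟩
    simp [entryAction, h, h']

theorem entryAction_ck1_diff (hC : C.IsCycle) {e f : Γ.E} (hef : e ≠ f)
    (z : Γ.V × List Γ.E × ℤ) :
    (C.entryAction (.edge f) z).bind (C.entryAction (.ghost e)) = none := by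
  obtain ⟨w, l, n⟩ := z
  by_cases h : C.IsEntry w l ∧ Γ.t f = w
  · by_cases hf : f ∈ C.edges
    · have he : ¬(e ∈ C.edges ∧ Γ.s e = Γ.s f) := fun h' => hef (hC.eq_of_src_eq h'.1 hf h'.2)
      simp [entryAction, h, hf, he]
    · simp [entryAction, h, hf, Ne.symm hef]
  · simp [entryAction, h]

theorem entryAction_ck2 (hC : C.IsCycle) {v : Γ.V} {S : Finset Γ.E}
    (hS : ∀ e, e ∈ S ↔ Γ.s e = v) (z : Γ.V × List Γ.E × ℤ) :
    ((∀ e ∈ S, (C.entryAction (.ghost e) z).bind (C.entryAction (.edge e)) = none) ∧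
        C.entryAction (.vert v) z = none) ∨
      ∃ e ∈ S, (C.entryAction (.ghost e) z).bind (C.entryAction (.edge e)) =
          C.entryAction (.vert v) z ∧
        ∀ e' ∈ S, e' ≠ e →
          (C.entryAction (.ghost e') z).bind (C.entryAction (.edge e')) = none := by
  obtain ⟨w, l, n⟩ := z
  by_cases h : C.IsEntry w l ∧ w = v
  · obtain ⟨h, rfl⟩ := h
    right
    obtain _ | ⟨f, l⟩ := l
    · obtain ⟨e, he, rfl⟩ := hC.exists_mem_src_eq (isEntry_nil.1 h)
      refine ⟨e, (hS e).2 rfl, ?_, fun e' _ he' => ?_⟩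
      · simp [entryAction, he, h, isEntry_nil.2 (C.onPath_trg_of_mem he)]
      · have : ¬(e' ∈ C.edges ∧ Γ.s e' = Γ.s e) := fun h' =>
          he' (hC.eq_of_src_eq h'.1 he h'.2)
        simp [entryAction, this]
    · have hf : f ∉ C.edges := h.2.1 f List.mem_cons_self
      refine ⟨f, (hS f).2 h.1.1, ?_, fun e' _ he' => ?_⟩
      · simp [entryAction, h, h.tail, hf, h.1.1]
      · simp [entryAction, Ne.symm he']
  · left
    refine ⟨fun e he => ?_, by simp [entryAction, h]⟩
    obtain _ | ⟨f, l⟩ := l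
    · have : ¬(e ∈ C.edges ∧ Γ.s e = w) := fun h' =>
        h ⟨isEntry_nil.2 (h'.2 ▸ C.onPath_src_of_mem h'.1), h'.2.symm.trans ((hS e).1 he)⟩
      simp [entryAction, this]
    · have : ¬(C.IsEntry w (f :: l) ∧ f = e) := fun h' =>
        h ⟨h'.1, h'.1.1.1.symm.trans (h'.2 ▸ (hS e).1 he)⟩
      simp [entryAction, this]

end Path

variable (k : Type) [CommRing k]

theorem lift_entryAction_rel (hC : C.IsCycle) (hne : NoExit C) ⦃x y : FreeAlgebra k (Gen Γ)⦄
    (h : LRel k Γ x y) :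
    FreeAlgebra.lift k (fun g => Finsupp.lmapPartial (k := k) (C.entryAction g)) x =
      FreeAlgebra.lift k (fun g => Finsupp.lmapPartial (k := k) (C.entryAction g)) y := by
  have lift_mul (a b : Gen Γ) :
      FreeAlgebra.lift k (fun g => Finsupp.lmapPartial (k := k) (C.entryAction g))
        (FreeAlgebra.ι k a * FreeAlgebra.ι k b) =
        Finsupp.lmapPartial fun z => (C.entryAction b z).bind (C.entryAction a) := by
    rw [map_mul, FreeAlgebra.lift_ι_apply, FreeAlgebra.lift_ι_apply, Module.End.mul_eq_comp,
      Finsupp.lmapPartial_comp]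
  cases h with
  | vert_idem u =>
    rw [lift_mul, FreeAlgebra.lift_ι_apply]
    exact congrArg _ (funext (Path.entryAction_vert_idem u))
  | vert_orth u w huw =>
    rw [lift_mul, map_zero, ← Finsupp.lmapPartial_none]
    exact congrArg _ (funext (Path.entryAction_vert_orth huw))
  | edge_src e =>
    rw [lift_mul, FreeAlgebra.lift_ι_apply]
    exact congrArg _ (funext (Path.entryAction_edge_src e))
  | edge_trg e =>
    rw [lift_mul, FreeAlgebra.lift_ι_apply]
    exact congrArg _ (funext (Path.entryAction_edge_trg e))
  | ghost_src e =>
    rw [lift_mul, FreeAlgebra.lift_ι_apply]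
    exact congrArg _ (funext (Path.entryAction_ghost_src e))
  | ghost_trg e =>
    rw [lift_mul, FreeAlgebra.lift_ι_apply]
    exact congrArg _ (funext (Path.entryAction_ghost_trg e))
  | ck1_same e =>
    rw [lift_mul, FreeAlgebra.lift_ι_apply]
    exact congrArg _ (funext (Path.entryAction_ck1_same hne e))
  | ck1_diff e f hef =>
    rw [lift_mul, map_zero, ← Finsupp.lmapPartial_none]
    exact congrArg _ (funext (Path.entryAction_ck1_diff hC hef))
  | ck2 v hfin _ =>
    rw [FreeAlgebra.lift_ι_apply, map_sum]
    simp_rw [lift_mul]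
    exact (Finsupp.sum_lmapPartial _ _ _
      (Path.entryAction_ck2 hC fun e => hfin.mem_toFinset)).symm

noncomputable def entryRep (hC : C.IsCycle) (hne : NoExit C) :
    LV k Γ →ₐ[k] Module.End k ((Γ.V × List Γ.E × ℤ) →₀ k) :=
  RingQuot.liftAlgHom k ⟨FreeAlgebra.lift k fun g => Finsupp.lmapPartial (C.entryAction g),
    lift_entryAction_rel k hC hne⟩

variable {k} (hC : C.IsCycle) (hne : NoExit C)

theorem entryRep_genL (g : Gen Γ) :
    entryRep k hC hne (genL k Γ g) = Finsupp.lmapPartial (C.entryAction g) := by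
  rw [entryRep, genL, RingQuot.liftAlgHom_mkAlgHom_apply, FreeAlgebra.lift_ι_apply]

theorem entryRep_wordStar {w : Γ.V} {l : List Γ.E} (hw : C.OnPath w) (hl : Γ.IsWalkFrom w l)
    (hlC : ∀ e ∈ l, e ∈ C.edges) (m : ℤ) (a : k) :
    entryRep k hC hne (wordStar Γ (genL k Γ) w l) (Finsupp.single (w, [], m) a) =
      Finsupp.single (Γ.walkTrg w l, [], m - (l.map C.winding).sum) a := by
  induction l generalizing w m with
  | nil =>
    rw [wordStar_nil, entryRep_genL, Finsupp.lmapPartial_single,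
      Path.entryAction_vert_self (Path.isEntry_nil.2 hw), Option.elim_some, List.map_nil,
      List.sum_nil, sub_zero]
    rfl
  | cons e l ih =>
    have he := hlC e List.mem_cons_self
    have hg : C.entryAction (.ghost e) (w, [], m) = some (Γ.t e, [], m - C.winding e) :=
      if_pos ⟨he, hl.1⟩
    rw [wordStar_cons, map_mul, map_mul, Module.End.mul_apply, Module.End.mul_apply, entryRep_genL,
      entryRep_genL, Finsupp.lmapPartial_single, Path.entryAction_vert_self (Path.isEntry_nil.2 hw),
      Option.elim_some, Finsupp.lmapPartial_single, hg, Option.elim_some,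
      ih (C.onPath_trg_of_mem he) hl.2 fun f hf => hlC f (List.mem_cons_of_mem e hf),
      List.map_cons, List.sum_cons, sub_sub]
    rfl

theorem entryRep_cycleZPow_one (m : ℤ) :
    entryRep k hC hne (cycleZPow k hC hne 1) (Finsupp.single (C.src, [], m) 1) =
      Finsupp.single (C.src, [], m - 1) 1 := by
  rw [cycleZPow_one, pStar, entryRep_wordStar hC hne (Or.inl rfl) C.valid fun _ h => h,
    hC.walkTrg_edges, hC.sum_winding_edges]

theorem entryRep_cycleZPow_zero (m : ℤ) :
    entryRep k hC hne (cycleZPow k hC hne 0) (Finsupp.single (C.src, [], m) 1) =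
      Finsupp.single (C.src, [], m) 1 := by
  rw [cycleZPow_zero, entryRep_genL, Finsupp.lmapPartial_single,
    Path.entryAction_vert_self (Path.isEntry_nil.2 (Or.inl rfl)), Option.elim_some]

theorem entryRep_cycleZPow (n m : ℤ) :
    entryRep k hC hne (cycleZPow k hC hne n) (Finsupp.single (C.src, [], m) 1) =
      Finsupp.single (C.src, [], m - n) 1 := by
  induction n using Int.induction_on generalizing m with
  | zero => rw [entryRep_cycleZPow_zero, sub_zero]
  | succ n ih =>
    rw [cycleZPow_add, map_mul, Module.End.mul_apply, entryRep_cycleZPow_one, ih,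
      sub_add_eq_sub_sub_swap]
  | pred n ih =>
    have hinv : entryRep k hC hne (cycleZPow k hC hne (-1)) (Finsupp.single (C.src, [], m) 1) =
        Finsupp.single (C.src, [], m + 1) 1 := by
      rw [← entryRep_cycleZPow_zero hC hne (m + 1), ← neg_add_cancel (1 : ℤ), cycleZPow_add,
        map_mul, Module.End.mul_apply, entryRep_cycleZPow_one, add_sub_cancel_right]
    rw [show -(n : ℤ) - 1 = -n + -1 by ring, cycleZPow_add, map_mul, Module.End.mul_apply, hinv,
      ih, show m + 1 - -(n : ℤ) = m - (-n + -1) by ring]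

theorem linearIndependent_cycleZPow : LinearIndependent k (cycleZPow k hC hne) := by
  let ev := LinearMap.applyₗ (R := k) (Finsupp.single ((C.src, [], 0) : Γ.V × List Γ.E × ℤ) 1)
    ∘ₗ (entryRep k hC hne).toLinearMap
  have hev : ev ∘ cycleZPow k hC hne = fun n => Finsupp.single (C.src, [], -n) 1 := by
    ext1 n
    simp [ev, entryRep_cycleZPow]
  refine LinearIndependent.of_comp ev ?_
  rw [hev]
  refine (Finsupp.linearIndependent_single_one k _).comp _ fun m n h => ?_
  simpa using h

end Representation

section LaurentHom

variable {k : Type} [CommRing k] (hC : C.IsCycle) (hne : NoExit C)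

theorem linearIndependent_cycleUnit_zpow : LinearIndependent k fun n : ℤ =>
    (↑(cycleUnit k hC hne ^ n) : (isIdempotentElem_genL_vert k C.src).Corner) :=
  (linearIndependent_cycleZPow hC hne).of_comp
    (LinearMapClass.linearMap ((isIdempotentElem_genL_vert k C.src).cornerSubtype k))

theorem span_cycleUnit_zpow : Submodule.span k (Set.range fun n : ℤ =>
    (↑(cycleUnit k hC hne ^ n) : (isIdempotentElem_genL_vert k C.src).Corner)) = ⊤ := by
  refine Submodule.eq_top_iff'.2 fun y => ?_
  obtain ⟨a, ha⟩ := y.2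
  rw [← Submodule.apply_mem_span_image_iff_mem_span
    (f := LinearMapClass.linearMap ((isIdempotentElem_genL_vert k C.src).cornerSubtype k))
    (IsIdempotentElem.cornerSubtype_injective (k := k) _), ← Set.range_comp]
  change y.1 ∈ Submodule.span k (Set.range (cycleZPow k hC hne))
  rw [← ha]
  exact vert_mul_mul_vert_mem_span_cycleZPow hC hne a

variable (k) in
noncomputable def cycleLaurentHom (hC : C.IsCycle) (hne : NoExit C) :
    LaurentPolynomial k →ₙₐ[k] LV k Γ :=
  ((isIdempotentElem_genL_vert k C.src).cornerSubtype k).comp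
    (AlgHom.toNonUnitalAlgHom (LaurentPolynomial.aevalUnit (k := k)
      (B := (isIdempotentElem_genL_vert k C.src).Corner) (cycleUnit k hC hne)))

theorem cycleLaurentHom_injective : Function.Injective (cycleLaurentHom k hC hne) :=
  (IsIdempotentElem.cornerSubtype_injective (k := k) _).comp
    (LaurentPolynomial.aevalUnit_injective (linearIndependent_cycleUnit_zpow hC hne))

theorem cycleLaurentHom_T (n : ℤ) :
    cycleLaurentHom k hC hne (LaurentPolynomial.T n) = cycleZPow k hC hne n := by
  change (isIdempotentElem_genL_vert k C.src).cornerSubtype k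
    (LaurentPolynomial.aevalUnit (cycleUnit k hC hne) (LaurentPolynomial.T n)) = _
  rw [LaurentPolynomial.aevalUnit_T]
  rfl

theorem range_cycleLaurentHom :
    Set.range (cycleLaurentHom k hC hne) =
      Set.range (genL k Γ (.vert C.src) * · * genL k Γ (.vert C.src)) := by
  change Set.range ((isIdempotentElem_genL_vert k C.src).cornerSubtype k ∘
    LaurentPolynomial.aevalUnit (cycleUnit k hC hne)) = _
  rw [Set.range_comp,
    (LaurentPolynomial.aevalUnit_surjective (span_cycleUnit_zpow hC hne)).range_eq,
    Set.image_univ, IsIdempotentElem.range_cornerSubtype]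

end LaurentHom

end DGraph

open DGraph in
theorem corner_iso_laurent_general (k : Type) [CommRing k] (Γ : DGraph)
    (C : Path Γ) (hC : C.IsCycle) (hne : NoExit C) :
    ∃ φ : LaurentPolynomial k →ₙₐ[k] LV k Γ,
      Function.Injective φ ∧
      φ (LaurentPolynomial.T 1) = pStar (genL k Γ) C ∧
      Set.range φ = {x : LV k Γ | ∃ a : LV k Γ,
        x = genL k Γ (Gen.vert C.src) * a * genL k Γ (Gen.vert C.src)} := by
  refine ⟨cycleLaurentHom k hC hne, cycleLaurentHom_injective hC hne,
    (cycleLaurentHom_T hC hne 1).trans (cycleZPow_one hC hne), ?_⟩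
  rw [range_cycleLaurentHom]
  ext x
  exact ⟨fun ⟨a, ha⟩ => ⟨a, ha.symm⟩, fun ⟨a, ha⟩ => ⟨a, ha.symm⟩⟩

open DGraph in
/-- if `C` is a cycle with no exit and `v = s(C)`, the corner algebra
`v L_k(Γ) v` is isomorphic to the Laurent polynomial algebra `k[x,x⁻¹]` with
`x ↦ C*`. -/
theorem corner_iso_laurent (k : Type) [CommRing k] (Γ : DGraph)
    (hrf : Γ.RowFinite) (C : Path Γ) (hC : C.IsCycle) (hne : NoExit C) :
    ∃ φ : LaurentPolynomial k →ₙₐ[k] LV k Γ,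
      Function.Injective φ ∧
      φ (LaurentPolynomial.T 1) = pStar (genL k Γ) C ∧
      Set.range φ = {x : LV k Γ | ∃ a : LV k Γ,
        x = genL k Γ (Gen.vert C.src) * a * genL k Γ (Gen.vert C.src)} :=
  corner_iso_laurent_general k Γ C hC hne
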